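/- Fix words u, w over A, x ∈ A^ℕ, and constants p₀, c ∈ ℕ. Suppose every occurrence of w beginning at position p > p₀ in x has an occurrence of u beginning at some position p' with |p − p'| ≤ c. Then for every L ∈ ℕ, D_L(u,x) ≥ C(u,w,c,L) · D_L(w,x), where C(u,w,c,L) = |u|/(3|w| + 3c/L) if |u| ≤ |w|, and C(u,w,c,L) = (L/3)·1/(3L + 6c/|u|) if |u| > |w|. -/
import Mathlib


/-- The word `w` occurs in `x` beginning at (0-indexed) position `i`. -/
def occursAt {A : Type*} (x : ℕ → A) (w : List A) (i : ℕ) : Prop :=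
  ∀ k, k < w.length → w[k]? = some (x (i + k))
open Classical in
/-- Indicator that `w` begins somewhere in the `j`-th consecutive block of length
`L * |w|` of `x` (blocks indexed from `j = 0`). -/
noncomputable def rBlock {A : Type*} (L : ℕ) (w : List A) (x : ℕ → A) (j : ℕ) : ℕ :=
  if ∃ i, j * (L * w.length) ≤ i ∧ i < (j + 1) * (L * w.length) ∧ occursAt x w i
  then 1 else 0

/-- The sum function `S_{L,N}(w,x)`. -/
noncomputable def sumFn {A : Type*} (L : ℕ) (w : List A) (x : ℕ → A) (N : ℕ) : ℕ :=
  ∑ j ∈ Finset.range N, rBlock L w x j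

/-- The disjoint upper density `D_L(w,x)`. -/
noncomputable def densD {A : Type*} (L : ℕ) (w : List A) (x : ℕ → A) : ℝ :=
  Filter.limsup (fun N => (sumFn L w x N : ℝ) / N) Filter.atTop

open Classical in
lemma sumFn_eq_card {A : Type*} (L : ℕ) (w : List A) (x : ℕ → A) (N : ℕ) :
    sumFn L w x N = ((Finset.range N).filter
      (fun j => ∃ i, j * (L * w.length) ≤ i ∧ i < (j + 1) * (L * w.length) ∧ occursAt x w i)).card := by
  classical
  unfold sumFn rBlock
  rw [Finset.sum_boole]
  simp

lemma counting {A : Type*} (u w : List A) (x : ℕ → A) (p₀ c L : ℕ)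
    (hL : 0 < L) (hu : 0 < u.length) (hw : 0 < w.length)
    (h : ∀ p, p₀ < p → occursAt x w p →
      ∃ p', occursAt x u p' ∧ p' ≤ p + c ∧ p ≤ p' + c) (N : ℕ) :
    sumFn L w x N ≤ (p₀ / (L * w.length) + 1) +
      ((L * u.length + 2 * c) / (L * w.length) + 2) *
        sumFn L u x ((N * (L * w.length) + c) / (L * u.length) + 1) := by
  classical
  have hBw : 0 < L * w.length := Nat.mul_pos hL hw
  have hBu : 0 < L * u.length := Nat.mul_pos hL hu
  rw [sumFn_eq_card, sumFn_eq_card]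
  set Bw := L * w.length with hBwdef
  set Bu := L * u.length with hBudef
  set B := p₀ / Bw with hBdef
  set D := (Bu + 2 * c) / Bw with hDdef
  set N' := (N * Bw + c) / Bu + 1 with hN'def
  have hp₀B : p₀ < (B + 1) * Bw := by
    have h1 := (Nat.div_lt_iff_lt_mul hBw).mp (Nat.lt_succ_self (p₀ / Bw))
    rw [← hBdef] at h1
    exact h1
  have hN'prop : ∀ k, k ≤ N * Bw + c → k / Bu < N' := by
    intro k hk
    have h1 : k / Bu ≤ (N * Bw + c) / Bu := Nat.div_le_div_right hk
    rw [hN'def]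
    exact Nat.lt_succ_of_le h1
  have hDprop : ∀ k, k * Bw ≤ Bu + 2 * c → k ≤ D := by
    intro k hk
    rw [hDdef]
    exact (Nat.le_div_iff_mul_le hBw).mpr hk
  clear_value B D N'
  set S := (Finset.range N).filter
      (fun j => ∃ i, j * Bw ≤ i ∧ i < (j + 1) * Bw ∧ occursAt x w i) with hSdef
  set T := S.filter (fun j => B < j) with hTdef
  have hsplit : S.card ≤ (B + 1) + T.card := by
    have hsub2 : S ⊆ Finset.range (B + 1) ∪ T := by
      intro j hj
      by_cases hc' : B < j
      · exact Finset.mem_union_right _ (Finset.mem_filter.2 ⟨hj, hc'⟩)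
      · exact Finset.mem_union_left _ (Finset.mem_range.2 (by omega))
    calc S.card ≤ (Finset.range (B + 1) ∪ T).card := Finset.card_le_card hsub2
      _ ≤ (B + 1) + T.card := by
          simpa using Finset.card_union_le (Finset.range (B + 1)) T
  -- nearby u occurrence for each j in T
  have key : ∀ j, j ∈ T → ∃ p' i, occursAt x u p' ∧ j * Bw ≤ i ∧ i < (j + 1) * Bw ∧
      p' ≤ i + c ∧ i ≤ p' + c := by
    intro j hj
    simp only [hTdef, hSdef, Finset.mem_filter, Finset.mem_range] at hj
    obtain ⟨⟨hjN, i, hi1, hi2, hiocc⟩, hjB⟩ := hj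
    have hp₀ : p₀ < i := by
      have h2 : (B + 1) * Bw ≤ j * Bw := Nat.mul_le_mul_right _ (by omega)
      omega
    obtain ⟨p', hocc, hpc1, hpc2⟩ := h i hp₀ hiocc
    exact ⟨p', i, hocc, hi1, hi2, hpc1, hpc2⟩
  choose! pu iw hocc hi1 hi2 hpc1 hpc2 using key
  have himg : ∀ j ∈ T, pu j / Bu ∈ (Finset.range N').filter
      (fun j' => ∃ i, j' * Bu ≤ i ∧ i < (j' + 1) * Bu ∧ occursAt x u i) := by
    intro j hj
    have hjN : j < N := by
      have h1 := Finset.mem_filter.1 hj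
      have h2 := Finset.mem_filter.1 h1.1
      exact Finset.mem_range.1 h2.1
    have h1 : pu j / Bu * Bu ≤ pu j := Nat.div_mul_le_self _ _
    have h2 : pu j < (pu j / Bu + 1) * Bu :=
      (Nat.div_lt_iff_lt_mul hBu).mp (Nat.lt_succ_self _)
    have hple : pu j < N * Bw + c := by
      have e2 := hpc1 j hj
      have e5 := hi2 j hj
      have e6 : (j + 1) * Bw ≤ N * Bw := Nat.mul_le_mul_right _ (by omega)
      omega
    exact Finset.mem_filter.2 ⟨Finset.mem_range.2 (hN'prop _ (le_of_lt hple)),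
      ⟨pu j, h1, h2, hocc j hj⟩⟩
  have hfib : ∀ b, (T.filter (fun j => pu j / Bu = b)).card ≤ D + 2 := by
    intro b
    set F := T.filter (fun j => pu j / Bu = b) with hFdef
    rcases Finset.eq_empty_or_nonempty F with hF | hF
    · simp [hF]
    · set a := F.min' hF with hadef
      have haF : a ∈ F := F.min'_mem hF
      have hsub : F ⊆ Finset.Icc a (a + (D + 1)) := by
        intro j hj
        have haj : a ≤ j := F.min'_le j hj
        have hjT : j ∈ T := (Finset.mem_filter.1 hj).1
        have haT : a ∈ T := (Finset.mem_filter.1 haF).1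
        have hfj : pu j / Bu = b := (Finset.mem_filter.1 hj).2
        have hfa : pu a / Bu = b := (Finset.mem_filter.1 haF).2
        have hj1 : b * Bu ≤ pu j := by
          have := Nat.div_mul_le_self (pu j) Bu; rw [hfj] at this; exact this
        have hj2 : pu j < (b + 1) * Bu := by
          have := (Nat.div_lt_iff_lt_mul hBu).mp (Nat.lt_succ_self (pu j / Bu))
          rw [hfj] at this; exact this
        have ha1 : b * Bu ≤ pu a := by
          have := Nat.div_mul_le_self (pu a) Bu; rw [hfa] at this; exact this
        have e1 : j * Bw ≤ iw j := hi1 j hjT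
        have e2 : iw j ≤ pu j + c := hpc2 j hjT
        have e3 : pu a ≤ iw a + c := hpc1 a haT
        have e4 : iw a < (a + 1) * Bw := hi2 a haT
        have ebU : (b + 1) * Bu = b * Bu + Bu := by ring
        have main : j * Bw < (a + 1) * Bw + Bu + 2 * c := by omega
        rw [Finset.mem_Icc]
        refine ⟨haj, ?_⟩
        by_cases hcase : j ≤ a + 1
        · omega
        · have hx : (j - a - 1) * Bw + (a + 1) * Bw = j * Bw := by
            rw [← Nat.add_mul]; congr 1; omega
          have hd : (j - a - 1) * Bw ≤ Bu + 2 * c := by omega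
          have hdd := hDprop _ hd
          omega
      have hcard := Finset.card_le_card hsub
      rw [Nat.card_Icc] at hcard
      omega
  have hcard : T.card ≤ (D + 2) * (T.image (fun j => pu j / Bu)).card :=
    Finset.card_le_mul_card_image T (D + 2) (fun b _ => hfib b)
  have himgsub : T.image (fun j => pu j / Bu) ⊆ (Finset.range N').filter
      (fun j' => ∃ i, j' * Bu ≤ i ∧ i < (j' + 1) * Bu ∧ occursAt x u i) := by
    intro b hb
    obtain ⟨j, hj, rfl⟩ := Finset.mem_image.1 hb
    exact himg j hj
  have hfin := Nat.mul_le_mul_left (D + 2) (Finset.card_le_card himgsub)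
  calc S.card ≤ (B + 1) + T.card := hsplit
    _ ≤ (B + 1) + (D + 2) * (T.image (fun j => pu j / Bu)).card :=
        Nat.add_le_add_left hcard _
    _ ≤ _ := Nat.add_le_add_left hfin _

lemma sumFn_le_card {A : Type*} (L : ℕ) (w : List A) (x : ℕ → A) (N : ℕ) :
    sumFn L w x N ≤ N := by
  unfold sumFn
  calc ∑ j ∈ Finset.range N, rBlock L w x j ≤ ∑ _j ∈ Finset.range N, 1 :=
        Finset.sum_le_sum (fun j _ => by unfold rBlock; split <;> simp)
    _ = N := by simp


open Filter in
lemma densD_le_aux {A : Type*} (u w : List A) (x : ℕ → A) (p₀ c L : ℕ)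
    (hL : 0 < L) (hu : 0 < u.length) (hw : 0 < w.length)
    (h : ∀ p, p₀ < p → occursAt x w p →
      ∃ p', occursAt x u p' ∧ p' ≤ p + c ∧ p ≤ p' + c) :
    densD L w x ≤ ((((L * u.length + 2 * c) / (L * w.length) + 2 : ℕ) : ℝ)
        * (L * w.length) / (L * u.length)) * densD L u x := by
  have hBw : (0:ℝ) < (L * w.length : ℕ) := by positivity
  have hBu : (0:ℝ) < (L * u.length : ℕ) := by positivity
  set M : ℕ := (L * u.length + 2 * c) / (L * w.length) + 2 with hMdef
  set R : ℝ := ((M : ℕ) : ℝ) * (L * w.length) / (L * u.length) with hRdef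
  have hR0 : 0 ≤ R := by rw [hRdef]; positivity
  clear_value R
  have hle1 : ∀ (v : List A) (N : ℕ), (sumFn L v x N : ℝ) / N ≤ 1 := by
    intro v N
    exact div_le_one_of_le₀ (by exact_mod_cast sumFn_le_card L v x N) (by positivity)
  have hnn : ∀ (v : List A) (N : ℕ), 0 ≤ (sumFn L v x N : ℝ) / N := by
    intro v N; positivity
  have hBddu : IsBoundedUnder (· ≤ ·) atTop (fun N => (sumFn L u x N : ℝ) / N) :=
    isBoundedUnder_of ⟨1, hle1 u⟩
  have hCobw : IsCoboundedUnder (· ≤ ·) atTop (fun N => (sumFn L w x N : ℝ) / N) := by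
    have hb : IsBoundedUnder (· ≥ ·) atTop (fun N => (sumFn L w x N : ℝ) / N) :=
      isBoundedUnder_of ⟨0, hnn w⟩
    exact hb.isCoboundedUnder_flip
  have hDu0 : 0 ≤ densD L u x :=
    le_limsup_of_frequently_le (Frequently.of_forall (hnn u)) hBddu
  refine le_of_forall_pos_le_add (fun ε hε => ?_)
  set δ : ℝ := ε / (2 * (R + 1)) with hδdef
  have hδ0 : 0 < δ := by rw [hδdef]; positivity
  have hRδ : R * δ ≤ ε / 2 := by
    have h7 : (R + 1) * δ = ε / 2 := by
      rw [hδdef]; field_simp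
    nlinarith
  clear_value δ
  set q : ℝ := densD L u x + δ with hqdef
  have hq0 : 0 ≤ q := by rw [hqdef]; linarith
  have hqval : densD L u x < q := by rw [hqdef]; linarith
  clear_value q
  have hev : ∀ᶠ k in atTop, (sumFn L u x k : ℝ) / k < q := by
    have hlt : Filter.limsup (fun N => (sumFn L u x N : ℝ) / N) atTop < q := hqval
    exact eventually_lt_of_limsup_lt hlt hBddu
  have hev2 : ∀ᶠ k in atTop, (sumFn L u x k : ℝ) ≤ q * k := by
    filter_upwards [hev, eventually_ge_atTop 1] with k h1 h2
    have hk0 : (0:ℝ) < k := by exact_mod_cast h2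
    rw [div_lt_iff₀ hk0] at h1
    linarith
  set g : ℕ → ℕ := fun N => (N * (L * w.length) + c) / (L * u.length) + 1 with hgdef
  have hg : Tendsto g atTop atTop := by
    rw [tendsto_atTop_atTop]
    intro b
    refine ⟨b * (L * u.length), fun N hN => ?_⟩
    have h1 : b * (L * u.length) ≤ N * (L * w.length) + c := by
      calc b * (L * u.length) ≤ N := hN
        _ ≤ N * (L * w.length) := Nat.le_mul_of_pos_right _ (Nat.mul_pos hL hw)
        _ ≤ N * (L * w.length) + c := Nat.le_add_right _ _
    have := (Nat.le_div_iff_mul_le (Nat.mul_pos hL hu)).mpr h1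
    simp only [hgdef]
    omega
  have hev3 : ∀ᶠ N in atTop, (sumFn L u x (g N) : ℝ) ≤ q * g N := hg.eventually hev2
  set K : ℕ := p₀ / (L * w.length) + 1 with hKdef
  set E : ℝ := (K : ℝ) + q * M * ((c : ℝ) / (L * u.length) + 2) with hEdef
  have hEeq : ∀ N : ℕ, (K : ℝ) + (M : ℝ) * (q * ((N : ℝ) * (L * w.length) / (L * u.length)
      + (c : ℝ) / (L * u.length) + 2)) = R * q * N + E := by
    intro N
    rw [hEdef, hRdef]
    push_cast
    ring
  clear_value E
  have hE : ∀ᶠ N : ℕ in atTop, E / (N : ℝ) < ε / 2 :=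
    (tendsto_const_div_atTop_nhds_zero_nat E).eventually_lt_const (by positivity)
  have hfinal : ∀ᶠ N in atTop, (sumFn L w x N : ℝ) / N ≤ R * q + ε / 2 := by
    filter_upwards [hev3, hE, eventually_ge_atTop 1] with N h3 h4 h5
    have hN0 : (0:ℝ) < N := by exact_mod_cast h5
    have hcount : (sumFn L w x N : ℝ) ≤ (K : ℝ) + (M : ℝ) * (sumFn L u x (g N) : ℝ) := by
      rw [hKdef, hMdef, hgdef]
      exact_mod_cast counting u w x p₀ c L hL hu hw h N
    have hgN : ((g N : ℕ) : ℝ) ≤ (N : ℝ) * (L * w.length) / (L * u.length)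
        + (c : ℝ) / (L * u.length) + 2 := by
      have h6 : (((N * (L * w.length) + c) / (L * u.length) : ℕ) : ℝ)
          ≤ ((N * (L * w.length) + c : ℕ) : ℝ) / ((L * u.length : ℕ) : ℝ) :=
        Nat.cast_div_le
      simp only [hgdef]
      push_cast at h6 ⊢
      rw [add_div] at h6
      linarith
    have hchain : (sumFn L w x N : ℝ) ≤ R * q * N + E := by
      have c1 : (sumFn L u x (g N) : ℝ) ≤ q * ((N : ℝ) * (L * w.length) / (L * u.length)
          + (c : ℝ) / (L * u.length) + 2) := by
        calc (sumFn L u x (g N) : ℝ) ≤ q * g N := h3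
          _ ≤ _ := mul_le_mul_of_nonneg_left hgN hq0
      have c2 := hEeq N
      have c3 : (M : ℝ) * (sumFn L u x (g N) : ℝ) ≤ (M : ℝ) * (q * _) :=
        mul_le_mul_of_nonneg_left c1 (by positivity)
      linarith
    rw [div_le_iff₀ hN0]
    rw [div_lt_iff₀ hN0] at h4
    nlinarith
  have hlimsup : densD L w x ≤ R * q + ε / 2 := limsup_le_of_le hCobw hfinal
  calc densD L w x ≤ R * q + ε / 2 := hlimsup
    _ = R * densD L u x + (R * δ + ε / 2) := by rw [hqdef]; ring
    _ ≤ R * densD L u x + ε := by linarith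

/-- if every occurrence of `w` at position `p > p₀` has a nearby
occurrence of `u` (within distance `c`), then
`D_L(u,x) ≥ C(u,w,c,L) · D_L(w,x)`. -/
theorem densD_neighboring {A : Type*} (u w : List A) (x : ℕ → A)
    (p₀ c L : ℕ) (hp₀ : 0 < p₀) (hc : 0 < c) (hL : 0 < L)
    (hu : 0 < u.length) (hw : 0 < w.length)
    (h : ∀ p, p₀ < p → occursAt x w p →
      ∃ p', occursAt x u p' ∧ p' ≤ p + c ∧ p ≤ p' + c) :
    (if u.length ≤ w.length then
        (u.length : ℝ) / (3 * w.length + 3 * c / L)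
      else
        ((L : ℝ) / 3) * (1 / (3 * L + 6 * c / u.length))) * densD L w x
      ≤ densD L u x := by
  have hkey := densD_le_aux u w x p₀ c L hL hu hw h
  have hDu0 : 0 ≤ densD L u x := by
    have hle1 : ∀ N : ℕ, (sumFn L u x N : ℝ) / N ≤ 1 := fun N =>
      div_le_one_of_le₀ (by exact_mod_cast sumFn_le_card L u x N) (by positivity)
    have hnn : ∀ N : ℕ, 0 ≤ (sumFn L u x N : ℝ) / N := fun N => by positivity
    exact Filter.le_limsup_of_frequently_le (Filter.Frequently.of_forall hnn)
      (Filter.isBoundedUnder_of ⟨1, hle1⟩)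
  set R : ℝ := (((L * u.length + 2 * c) / (L * w.length) + 2 : ℕ) : ℝ)
      * (L * w.length) / (L * u.length) with hRdef
  set C : ℝ := if u.length ≤ w.length then
        (u.length : ℝ) / (3 * w.length + 3 * c / L)
      else
        ((L : ℝ) / 3) * (1 / (3 * L + 6 * c / u.length)) with hCdef
  -- basic cast facts
  have hL1 : (1:ℝ) ≤ (L:ℝ) := by exact_mod_cast hL
  have hn1 : (1:ℝ) ≤ (u.length:ℝ) := by exact_mod_cast hu
  have hm1 : (1:ℝ) ≤ (w.length:ℝ) := by exact_mod_cast hw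
  have hc0 : (0:ℝ) ≤ (c:ℝ) := by positivity
  have hC0 : 0 ≤ C := by
    rw [hCdef]
    split_ifs
    · positivity
    · positivity
  -- bound on the cast nat division
  have hMle : ((((L * u.length + 2 * c) / (L * w.length) + 2 : ℕ)) : ℝ)
      ≤ ((L:ℝ) * u.length + 2 * c) / ((L:ℝ) * w.length) + 2 := by
    have h1 := Nat.cast_div_le (α := ℝ) (m := L * u.length + 2 * c) (n := L * w.length)
    push_cast at h1 ⊢
    linarith
  have hX : ((((L * u.length + 2 * c) / (L * w.length) + 2 : ℕ)) : ℝ) * ((L:ℝ) * w.length)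
      ≤ (L:ℝ) * u.length + 2 * c + 2 * ((L:ℝ) * w.length) := by
    have h2 := mul_le_mul_of_nonneg_right hMle (by positivity : (0:ℝ) ≤ (L:ℝ) * w.length)
    have h3 : (((L:ℝ) * u.length + 2 * c) / ((L:ℝ) * w.length) + 2) * ((L:ℝ) * w.length)
        = (L:ℝ) * u.length + 2 * c + 2 * ((L:ℝ) * w.length) := by
      field_simp
    linarith
  -- per-case bound
  have hCY : C * ((L:ℝ) * u.length + 2 * c + 2 * ((L:ℝ) * w.length)) ≤ (L:ℝ) * u.length := by
    rw [hCdef]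
    split_ifs with hcase
    · -- u.length ≤ w.length
      have hnm : (u.length:ℝ) ≤ (w.length:ℝ) := by exact_mod_cast hcase
      have hden : (0:ℝ) < 3 * (w.length:ℝ) + 3 * c / L := by positivity
      rw [div_mul_eq_mul_div, div_le_iff₀ hden]
      have hcl : (L:ℝ) * u.length * (3 * (c:ℝ) / L) = 3 * c * u.length := by
        field_simp
      nlinarith [mul_le_mul_of_nonneg_left hnm
        (by positivity : (0:ℝ) ≤ (L:ℝ) * u.length)]
    · -- u.length > w.length
      have hmn : (w.length:ℝ) ≤ (u.length:ℝ) := by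
        have := lt_of_not_ge hcase
        exact_mod_cast this.le
      have hden : (0:ℝ) < 3 * (L:ℝ) + 6 * c / u.length := by positivity
      have hform : ((L:ℝ) / 3) * (1 / (3 * L + 6 * c / u.length))
          * ((L:ℝ) * u.length + 2 * c + 2 * ((L:ℝ) * w.length))
          = ((L:ℝ) * ((L:ℝ) * u.length + 2 * c + 2 * ((L:ℝ) * w.length)) / 3)
            / (3 * (L:ℝ) + 6 * c / u.length) := by
        ring
      rw [hform, div_le_iff₀ hden]
      have hexp : (L:ℝ) * u.length * (3 * (L:ℝ) + 6 * c / u.length)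
          = 3 * (L:ℝ)^2 * u.length + 6 * (L:ℝ) * c := by
        have hn0 : (u.length:ℝ) ≠ 0 := by positivity
        field_simp
      rw [hexp]
      nlinarith [mul_le_mul_of_nonneg_left hmn
        (by positivity : (0:ℝ) ≤ 2 * (L:ℝ) * (L:ℝ))]
  have hCR : C * R ≤ 1 := by
    have hBu : (0:ℝ) < (L:ℝ) * u.length := by positivity
    have e1 : C * R = C * ((((L * u.length + 2 * c) / (L * w.length) + 2 : ℕ) : ℝ)
        * ((L:ℝ) * w.length)) / ((L:ℝ) * u.length) := by
      rw [hRdef]; push_cast; ring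
    rw [e1, div_le_one hBu]
    calc C * ((((L * u.length + 2 * c) / (L * w.length) + 2 : ℕ) : ℝ) * ((L:ℝ) * w.length))
        ≤ C * ((L:ℝ) * u.length + 2 * c + 2 * ((L:ℝ) * w.length)) :=
          mul_le_mul_of_nonneg_left hX hC0
      _ ≤ (L:ℝ) * u.length := hCY
  calc C * densD L w x ≤ C * (R * densD L u x) := mul_le_mul_of_nonneg_left hkey hC0
    _ = (C * R) * densD L u x := by ring
    _ ≤ 1 * densD L u x := mul_le_mul_of_nonneg_right hCR hDu0
    _ = densD L u x := one_mul _
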